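/- Let $x$ and $k$ be positive integers. Then: (a) if $k = 1$, then $v_3(S_k(x)) = v_3(x(x+1))$; (b) if $k$ is even, then $v_3(S_k(x)) = v_3(x(x+1)(2x+1)) - 1$; (c) if $x \equiv 1 \pmod{3}$ and $k \ge 3$ is odd, then $v_3(S_k(x)) = 0$; (d) if $x \equiv 0$ or $2 \pmod{3}$ and $k \ge 3$ is odd, then $v_3(S_k(x)) = v_3(k x^2 (x+1)^2) - 1$. -/

import Mathlib

/-!
Even `k`: exactly one of `x`, `x + 1`, `2x + 1` is a multiple `3y` of 3, and `S_k(x)` agrees with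
`S_k(3y)` (up to the unit 2) modulo `3 ^ (v₃ y + 1)`, because `(x + 1)^k` is divisible by `x + 1`
and `i ↦ 2x + 1 - i` pairs up the terms of `S_k(2x)`. Sums over consecutive blocks of length `n`
are periodic modulo `n`, and if `3^m ∣ n` then, expanding `(r + s n)^k` to first order,
tripling the block multiplies the sum by 3 modulo `3^(m+1)`; hence `S_k(3y) ≡ 2y`.

Odd `k ≥ 3` and `3 ∣ x`: pairing `i` with `x - i` and expanding binomially,
`2 S_k(x) ≡ k x S_{k-1}(x)` modulo `3 ^ (v₃ k + 2 v₃ x)`, since `3^(v₃ k + 2 v₃ x)` divides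
`C(k, j) x^j` for `j ≥ 2`; the even case evaluates the valuation of the right-hand side. For
`x ≡ 2` pass to `x + 1`, and for `x ≡ 1` Fermat gives `S_k(x) ≡ S_1(x) = x(x+1)/2 ≡ 1 (mod 3)`.
-/

/-- `S k x = 1^k + 2^k + ... + x^k`. -/
def S (k x : ℕ) : ℕ := ∑ i ∈ Finset.Icc 1 x, i ^ k

open Finset

lemma padicValNat_eq_of_modEq {p a b n : ℕ} [Fact p.Prime] (hb : b ≠ 0) (h : a ≡ b [MOD n])
    (hn : p ^ (padicValNat p b + 1) ∣ n) : padicValNat p a = padicValNat p b := by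
  have hdvd : ∀ m ≤ padicValNat p b + 1, p ^ m ∣ a ↔ p ^ m ∣ b := fun m hm =>
    (h.of_dvd hn).dvd_iff (pow_dvd_pow p hm)
  have h1 := hdvd _ le_rfl
  have h2 := hdvd _ (Nat.le_succ _)
  simp only [padicValNat_dvd_iff, hb, false_or, le_refl, iff_true, Nat.not_succ_le_self,
    iff_false] at h1 h2
  omega

lemma add_pow_of_sq_eq_zero {R : Type*} [CommRing R] {y : R} (hy : y ^ 2 = 0) (x : R) (k : ℕ) :
    (x + y) ^ k = x ^ k + k * x ^ (k - 1) * y := by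
  have h := sq_dvd_add_pow_sub_sub y x k
  rw [hy, zero_dvd_iff, sub_sub, sub_eq_zero] at h
  rw [h]
  ring

lemma padicValNat_mul_of_not_dvd {p a : ℕ} [Fact p.Prime] (ha : ¬ p ∣ a) (n : ℕ) :
    padicValNat p (a * n) = padicValNat p n := by
  rcases eq_or_ne n 0 with rfl | hn
  · simp
  rw [padicValNat.mul (by rintro rfl; exact ha (dvd_zero p)) hn, padicValNat.eq_zero_of_not_dvd ha,
    zero_add]

lemma padicValNat_le_sub_two {p j : ℕ} [hp : Fact p.Prime] (hp2 : p ≠ 2) (hj : 2 ≤ j) :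
    padicValNat p j ≤ j - 2 := by
  set t := padicValNat p j
  have hp3 : 3 ≤ p := by have := hp.out.two_le; omega
  have hbernoulli : 1 + t * 2 ≤ 3 ^ t := by
    have := one_add_mul_le_pow (by norm_num : (-2 : ℤ) ≤ 2) t
    norm_num at this
    exact_mod_cast this
  have hpow : p ^ t ≤ j := Nat.le_of_dvd (by omega) pow_padicValNat_dvd
  have := Nat.pow_le_pow_left hp3 t
  omega

lemma padicValNat_le_add_padicValNat_choose {p n j : ℕ} [Fact p.Prime] (hj : j ≠ 0)
    (hjn : j ≤ n) : padicValNat p n ≤ padicValNat p j + padicValNat p (n.choose j) := by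
  obtain ⟨n, rfl⟩ : ∃ m, n = m + 1 := ⟨n - 1, by omega⟩
  obtain ⟨j, rfl⟩ : ∃ i, j = i + 1 := ⟨j - 1, by omega⟩
  have hid := congrArg (padicValNat p) (Nat.add_one_mul_choose_eq n j)
  rw [padicValNat.mul (by omega) (Nat.choose_pos (by omega)).ne',
    padicValNat.mul (Nat.choose_pos hjn).ne' (by omega)] at hid
  omega

lemma pow_dvd_choose_mul_pow {p : ℕ} [Fact p.Prime] (hp2 : p ≠ 2) {v : ℕ} (hv : v ≠ 0) {x : ℤ}
    (hx : (p : ℤ) ^ v ∣ x) {n j : ℕ} (hj : 2 ≤ j) (hjn : j ≤ n) :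
    (p : ℤ) ^ (padicValNat p n + 2 * v) ∣ n.choose j * x ^ j := by
  have hn := padicValNat_le_add_padicValNat_choose (p := p) (by omega : j ≠ 0) hjn
  have hj2 := padicValNat_le_sub_two hp2 hj
  obtain ⟨i, rfl⟩ := Nat.exists_eq_add_of_le' hj
  have hiv : i ≤ i * v := Nat.le_mul_of_pos_right i (Nat.pos_of_ne_zero hv)
  have hchoose : (p : ℤ) ^ padicValNat p (n.choose (i + 2)) ∣ n.choose (i + 2) := by
    exact_mod_cast pow_padicValNat_dvd
  calc (p : ℤ) ^ (padicValNat p n + 2 * v)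
      ∣ (p : ℤ) ^ (padicValNat p (n.choose (i + 2)) + v * (i + 2)) :=
        pow_dvd_pow _ (by rw [Nat.add_sub_cancel] at hj2; nlinarith)
    _ = (p : ℤ) ^ padicValNat p (n.choose (i + 2)) * ((p : ℤ) ^ v) ^ (i + 2) := by
        rw [pow_add, pow_mul]
    _ ∣ n.choose (i + 2) * x ^ (i + 2) := mul_dvd_mul hchoose (pow_dvd_pow_of_dvd hx _)

lemma add_pow_modEq_of_pow_dvd {p : ℕ} [Fact p.Prime] (hp2 : p ≠ 2) {v : ℕ} (hv : v ≠ 0) {x : ℤ}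
    (hx : (p : ℤ) ^ v ∣ x) (b : ℤ) (k : ℕ) :
    (b + x) ^ k ≡ b ^ k + k * b ^ (k - 1) * x [ZMOD p ^ (padicValNat p k + 2 * v)] := by
  rcases k with _ | k
  · simp
  have htail : (p : ℤ) ^ (padicValNat p (k + 1) + 2 * v) ∣
      ∑ j ∈ range k, x ^ (j + 2) * b ^ (k + 1 - (j + 2)) * (k + 1).choose (j + 2) :=
    dvd_sum fun j hj => by
      rw [mem_range] at hj
      rw [mul_right_comm, mul_comm (x ^ (j + 2))]
      apply Dvd.dvd.mul_right
      exact pow_dvd_choose_mul_pow hp2 hv hx (n := k + 1) (j := j + 2) (by omega) (by omega)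
  rw [add_comm b, add_pow, sum_range_succ', sum_range_succ']
  calc _ ≡ 0 + x ^ (0 + 1) * b ^ (k + 1 - (0 + 1)) * (k + 1).choose (0 + 1) +
        x ^ 0 * b ^ (k + 1 - 0) * (k + 1).choose 0 [ZMOD _] :=
        ((Int.modEq_zero_iff_dvd.2 htail).add_right _).add_right _
    _ = _ := by
        simp only [zero_add, pow_zero, pow_one, Nat.choose_zero_right, Nat.choose_one_right,
          Nat.sub_zero, Nat.add_sub_cancel, Nat.cast_one, Nat.cast_add]
        ring

lemma S_eq_sum_range (k x : ℕ) : S k x = ∑ i ∈ range x, (i + 1) ^ k := by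
  rw [S, ← Ico_add_one_right_eq_Icc, sum_Ico_eq_sum_range, add_tsub_cancel_right]
  simp only [add_comm 1]

lemma S_add (k a b : ℕ) : S k (a + b) = S k a + ∑ i ∈ range b, (a + i + 1) ^ k := by
  simp only [S_eq_sum_range, sum_range_add, add_assoc]

lemma S_succ (k x : ℕ) : S k (x + 1) = S k x + (x + 1) ^ k := by
  simpa using S_add k x 1

lemma S_ne_zero (k : ℕ) {x : ℕ} (hx : x ≠ 0) : S k x ≠ 0 := by
  obtain ⟨y, rfl⟩ := Nat.exists_eq_succ_of_ne_zero hx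
  rw [S_succ]
  positivity

lemma S_eq_sum_range_succ {k : ℕ} (hk : k ≠ 0) (x : ℕ) : S k x = ∑ i ∈ range (x + 1), i ^ k := by
  rw [S_eq_sum_range, sum_range_succ', zero_pow hk, add_zero]

lemma S_modEq_S_succ (k x : ℕ) : S k x ≡ S k (x + 1) [MOD (x + 1) ^ k] := by
  simp [S_succ, Nat.ModEq]

lemma S_mul_modEq (k n y : ℕ) : S k (n * y) ≡ y * S k n [MOD n] := by
  induction y with
  | zero => simp [S_eq_sum_range, Nat.ModEq]
  | succ y ih =>
    rw [Nat.mul_succ, S_add, Nat.succ_mul]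
    refine ih.add ?_
    rw [S_eq_sum_range]
    refine Nat.ModEq.sum fun i _ => Nat.ModEq.pow k ?_
    simp [Nat.ModEq, add_assoc]

lemma S_three_modEq_two {k : ℕ} (hk : Even k) (hk0 : k ≠ 0) : S k 3 ≡ 2 [MOD 3] := by
  obtain ⟨t, rfl⟩ := hk
  have ht : t ≠ 0 := by omega
  simp [S_eq_sum_range, sum_range_succ, Nat.ModEq, Nat.add_mod, Nat.pow_mod, ← two_mul, pow_mul, ht]

lemma S_three_mul_modEq (k : ℕ) {m n : ℕ} (hm : m ≠ 0) (hn : 3 ^ m ∣ n) :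
    S k (3 * n) ≡ 3 * S k n [MOD 3 ^ (m + 1)] := by
  rw [← ZMod.natCast_eq_natCast_iff]
  have hn2 : (n : ZMod (3 ^ (m + 1))) ^ 2 = 0 := by
    rw [← Nat.cast_pow, ZMod.natCast_eq_zero_iff]
    calc 3 ^ (m + 1) ∣ (3 ^ m) ^ 2 := by rw [← pow_mul]; exact pow_dvd_pow 3 (by omega)
      _ ∣ n ^ 2 := pow_dvd_pow_of_dvd hn 2
  have h3n : (3 * n : ZMod (3 ^ (m + 1))) = 0 := by
    exact_mod_cast (ZMod.natCast_eq_zero_iff _ _).2 (by rw [pow_succ']; exact mul_dvd_mul_left 3 hn)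
  set W : ZMod (3 ^ (m + 1)) := ∑ i ∈ range n, ((i : ZMod (3 ^ (m + 1))) + 1) ^ (k - 1)
  have shift : ∀ a : ℕ, (a : ZMod (3 ^ (m + 1))) ^ 2 = 0 →
      ((∑ i ∈ range n, (a + i + 1) ^ k : ℕ) : ZMod (3 ^ (m + 1))) = S k n + k * a * W := by
    intro a ha
    rw [S_eq_sum_range, mul_sum]
    push_cast
    rw [← sum_add_distrib]
    refine sum_congr rfl fun i _ => ?_
    rw [show (a + i + 1 : ZMod (3 ^ (m + 1))) = i + 1 + a by ring, add_pow_of_sq_eq_zero ha]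
    ring
  rw [show 3 * n = n + n + n by ring, S_add, S_add, Nat.cast_add, Nat.cast_add,
    shift n hn2, shift (n + n) (by push_cast; linear_combination 4 * hn2)]
  push_cast
  linear_combination (k : ZMod (3 ^ (m + 1))) * W * h3n

lemma S_three_mul_modEq_two_mul {k : ℕ} (hk : Even k) (hk0 : k ≠ 0) {m y : ℕ} (hy : 3 ^ m ∣ y) :
    S k (3 * y) ≡ 2 * y [MOD 3 ^ (m + 1)] := by
  induction m generalizing y with
  | zero =>
    calc S k (3 * y) ≡ y * S k 3 [MOD 3] := S_mul_modEq k 3 y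
      _ ≡ y * 2 [MOD 3] := (S_three_modEq_two hk hk0).mul_left y
      _ = 2 * y := mul_comm y 2
  | succ m ih =>
    obtain ⟨z, rfl⟩ : 3 ∣ y := (dvd_pow_self 3 (Nat.succ_ne_zero m)).trans hy
    have hz : 3 ^ m ∣ z := by rwa [pow_succ', Nat.mul_dvd_mul_iff_left (by norm_num)] at hy
    calc S k (3 * (3 * z)) ≡ 3 * S k (3 * z) [MOD 3 ^ (m + 1 + 1)] :=
          S_three_mul_modEq k (Nat.succ_ne_zero m) (by rw [pow_succ']; exact mul_dvd_mul_left 3 hz)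
      _ ≡ 3 * (2 * z) [MOD 3 ^ (m + 1 + 1)] := by
          rw [pow_succ' 3 (m + 1)]; exact (ih hz).mul_left' 3
      _ = 2 * (3 * z) := by ring

lemma S_two_mul_modEq {k : ℕ} (hk : Even k) (x : ℕ) : S k (2 * x) ≡ 2 * S k x [MOD 2 * x + 1] := by
  rw [← ZMod.natCast_eq_natCast_iff, two_mul, S_add, ← sum_range_reflect]
  have reflect : ∀ j ∈ range x,
      (((x + (x - 1 - j) + 1) ^ k : ℕ) : ZMod (x + x + 1))
        = (((j + 1) ^ k : ℕ) : ZMod (x + x + 1)) := by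
    intro j hj
    have hneg : ((x + (x - 1 - j) + 1 : ℕ) : ZMod (x + x + 1)) = -(j + 1 : ℕ) := by
      rw [eq_neg_iff_add_eq_zero, ← Nat.cast_add, ZMod.natCast_eq_zero_iff]
      rw [mem_range] at hj
      exact dvd_of_eq (by omega)
    rw [Nat.cast_pow, Nat.cast_pow, hneg, hk.neg_pow]
  rw [Nat.cast_add, Nat.cast_sum, sum_congr rfl reflect, ← Nat.cast_sum, ← S_eq_sum_range]
  push_cast
  ring

lemma padicValNat_S_three_mul {k y : ℕ} (hk : Even k) (hk0 : k ≠ 0) (hy : y ≠ 0) :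
    padicValNat 3 (S k (3 * y)) = padicValNat 3 y := by
  have h2y : padicValNat 3 (2 * y) = padicValNat 3 y := padicValNat_mul_of_not_dvd (by norm_num) y
  rw [← h2y]
  refine padicValNat_eq_of_modEq (by omega)
    (S_three_mul_modEq_two_mul hk hk0 (pow_padicValNat_dvd (n := y))) ?_
  rw [h2y]

theorem padicValNat_S_of_even {k x : ℕ} (hk : Even k) (hk0 : k ≠ 0) (hx : x ≠ 0) :
    padicValNat 3 (S k x) = padicValNat 3 (x * (x + 1) * (2 * x + 1)) - 1 := by
  rw [padicValNat.mul (by positivity) (by omega), padicValNat.mul hx (by omega)]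
  rcases (by omega : x % 3 = 0 ∨ x % 3 = 2 ∨ x % 3 = 1) with h3 | h3 | h3
  · obtain ⟨y, hy⟩ : 3 ∣ x := by omega
    have hy0 : y ≠ 0 := by omega
    rw [padicValNat.eq_zero_of_not_dvd (by omega : ¬ 3 ∣ x + 1),
      padicValNat.eq_zero_of_not_dvd (by omega : ¬ 3 ∣ 2 * x + 1), hy,
      padicValNat_base_mul (by norm_num) hy0, padicValNat_S_three_mul hk hk0 hy0]
    rfl
  · obtain ⟨y, hy⟩ : 3 ∣ x + 1 := by omega
    have hy0 : y ≠ 0 := by omega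
    have hSy := padicValNat_S_three_mul hk hk0 hy0
    rw [padicValNat.eq_zero_of_not_dvd (by omega : ¬ 3 ∣ x),
      padicValNat.eq_zero_of_not_dvd (by omega : ¬ 3 ∣ 2 * x + 1), hy,
      padicValNat_base_mul (by norm_num) hy0, ← hSy, ← hy, zero_add, add_zero, Nat.add_sub_cancel]
    refine padicValNat_eq_of_modEq (S_ne_zero k (by omega)) (S_modEq_S_succ k x) ?_
    rw [hy, hSy, pow_succ']
    exact (mul_dvd_mul_left 3 pow_padicValNat_dvd).trans (dvd_pow_self _ hk0)
  · obtain ⟨y, hy⟩ : 3 ∣ 2 * x + 1 := by omega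
    have hy0 : y ≠ 0 := by omega
    have hSy := padicValNat_S_three_mul hk hk0 hy0
    rw [padicValNat.eq_zero_of_not_dvd (by omega : ¬ 3 ∣ x),
      padicValNat.eq_zero_of_not_dvd (by omega : ¬ 3 ∣ x + 1), hy,
      padicValNat_base_mul (by norm_num) hy0, ← hSy, ← hy,
      zero_add, zero_add, Nat.add_sub_cancel, ← padicValNat_mul_of_not_dvd (by norm_num : ¬ 3 ∣ 2)]
    have hmod : 2 * S k x ≡ S k (2 * x + 1) [MOD 2 * x + 1] :=
      (S_two_mul_modEq hk x).symm.trans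
        ((S_modEq_S_succ k (2 * x)).of_dvd (dvd_pow_self _ hk0))
    refine padicValNat_eq_of_modEq (S_ne_zero k (by omega)) hmod ?_
    rw [hy, hSy, pow_succ']
    exact mul_dvd_mul_left 3 pow_padicValNat_dvd

lemma two_mul_sum_range_pow_modEq {p : ℕ} [Fact p.Prime] (hp2 : p ≠ 2) {v x k : ℕ} (hv : v ≠ 0)
    (hx : p ^ v ∣ x) (hk : Odd k) :
    2 * ∑ i ∈ range (x + 1), (i : ℤ) ^ k ≡ k * x * ∑ i ∈ range (x + 1), (i : ℤ) ^ (k - 1)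
      [ZMOD p ^ (padicValNat p k + 2 * v)] := by
  have reflect : ∑ i ∈ range (x + 1), (i : ℤ) ^ k = ∑ i ∈ range (x + 1), ((x : ℤ) - i) ^ k := by
    rw [← sum_range_reflect]
    refine sum_congr rfl fun i hi => ?_
    rw [mem_range] at hi
    rw [Nat.add_sub_cancel, Nat.cast_sub (by omega)]
  have pair : ∀ i : ℕ, (i : ℤ) ^ k + ((x : ℤ) - i) ^ k ≡ k * x * (i : ℤ) ^ (k - 1)
      [ZMOD p ^ (padicValNat p k + 2 * v)] := by
    intro i
    have h := add_pow_modEq_of_pow_dvd hp2 hv (x := x) (by exact_mod_cast hx) (-(i : ℤ)) k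
    rw [hk.neg_pow, (Nat.Odd.sub_odd hk odd_one).neg_pow] at h
    calc (i : ℤ) ^ k + ((x : ℤ) - i) ^ k = i ^ k + (-i + x) ^ k := by ring
      _ ≡ i ^ k + (-i ^ k + k * i ^ (k - 1) * x) [ZMOD _] := h.add_left _
      _ = k * x * i ^ (k - 1) := by ring
  calc 2 * ∑ i ∈ range (x + 1), (i : ℤ) ^ k
      = ∑ i ∈ range (x + 1), ((i : ℤ) ^ k + ((x : ℤ) - i) ^ k) := by
        rw [sum_add_distrib, ← reflect, two_mul]
    _ ≡ ∑ i ∈ range (x + 1), k * x * (i : ℤ) ^ (k - 1) [ZMOD _] :=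
        Int.ModEq.sum fun i _ => pair i
    _ = k * x * ∑ i ∈ range (x + 1), (i : ℤ) ^ (k - 1) := (mul_sum ..).symm

lemma two_mul_S_modEq {p : ℕ} [Fact p.Prime] (hp2 : p ≠ 2) {v x k : ℕ} (hv : v ≠ 0)
    (hx : p ^ v ∣ x) (hk : Odd k) (hk1 : k ≠ 1) :
    2 * S k x ≡ k * x * S (k - 1) x [MOD p ^ (padicValNat p k + 2 * v)] := by
  rw [← Int.natCast_modEq_iff, S_eq_sum_range_succ (by grind), S_eq_sum_range_succ (by grind)]
  push_cast
  exact two_mul_sum_range_pow_modEq hp2 hv hx hk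

lemma padicValNat_S_of_odd_of_three_dvd {k x : ℕ} (hk : Odd k) (hk1 : k ≠ 1) (hx : x ≠ 0)
    (h3 : 3 ∣ x) : padicValNat 3 (S k x) + 1 = padicValNat 3 k + 2 * padicValNat 3 x := by
  obtain ⟨y, rfl⟩ := h3
  have hy : y ≠ 0 := by omega
  have hk0 : k ≠ 0 := by grind
  have hv : padicValNat 3 (3 * y) = padicValNat 3 y + 1 := padicValNat_base_mul (by norm_num) hy
  have hb : padicValNat 3 (k * (3 * y) * S (k - 1) (3 * y)) + 1
      = padicValNat 3 k + 2 * padicValNat 3 (3 * y) := by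
    rw [padicValNat.mul (by positivity) (S_ne_zero _ hx), padicValNat.mul hk0 hx,
      padicValNat_S_three_mul (Nat.Odd.sub_odd hk odd_one) (by grind) hy, hv]
    ring
  have hcong := two_mul_S_modEq (by norm_num) (by rw [hv]; omega)
    (pow_padicValNat_dvd (p := 3) (n := 3 * y)) hk hk1
  have hb0 : k * (3 * y) * S (k - 1) (3 * y) ≠ 0 :=
    mul_ne_zero (mul_ne_zero hk0 hx) (S_ne_zero _ hx)
  have h := padicValNat_eq_of_modEq hb0 hcong (by rw [hb])
  rw [← hb, ← h, padicValNat_mul_of_not_dvd (by norm_num)]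

theorem padicValNat_S_of_odd {k x : ℕ} (hk : Odd k) (hk1 : k ≠ 1) (hx : x ≠ 0)
    (h3 : x % 3 = 0 ∨ x % 3 = 2) :
    padicValNat 3 (S k x) = padicValNat 3 (k * x ^ 2 * (x + 1) ^ 2) - 1 := by
  have hk0 : k ≠ 0 := by grind
  rw [padicValNat.mul (by positivity) (by positivity), padicValNat.mul hk0 (by positivity),
    padicValNat.pow, padicValNat.pow]
  rcases h3 with h3 | h3
  · have h := padicValNat_S_of_odd_of_three_dvd hk hk1 hx (by omega)
    rw [padicValNat.eq_zero_of_not_dvd (by omega : ¬ 3 ∣ x + 1)]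
    omega
  · have h := padicValNat_S_of_odd_of_three_dvd hk hk1 (by omega : x + 1 ≠ 0) (by omega)
    rw [padicValNat.eq_zero_of_not_dvd (by omega : ¬ 3 ∣ x), padicValNat_eq_of_modEq
      (S_ne_zero k (by omega)) (S_modEq_S_succ k x) ?_]
    · omega
    set w := padicValNat 3 (x + 1)
    have hw : w ≠ 0 := (dvd_iff_padicValNat_ne_zero (by omega)).1 (by omega)
    have hk2 : 2 ≤ k := by grind
    have hk3 : padicValNat 3 k ≤ k - 2 := padicValNat_le_sub_two (by norm_num) hk2
    have hkw : k - 2 ≤ (k - 2) * w := Nat.le_mul_of_pos_right _ (Nat.pos_of_ne_zero hw)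
    have hsplit : (k - 2) * w + 2 * w = w * k := by
      rw [← Nat.add_mul, Nat.sub_add_cancel hk2, mul_comm]
    calc 3 ^ (padicValNat 3 (S k (x + 1)) + 1) ∣ 3 ^ (w * k) := pow_dvd_pow 3 (by omega)
      _ = (3 ^ w) ^ k := pow_mul 3 w k
      _ ∣ (x + 1) ^ k := pow_dvd_pow_of_dvd pow_padicValNat_dvd k

lemma pow_eq_self_of_odd {k : ℕ} (hk : Odd k) (a : ZMod 3) : a ^ k = a := by
  rcases eq_or_ne a 0 with rfl | ha
  · exact zero_pow hk.pos.ne'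
  have hsq : a ^ 2 = 1 := ZMod.pow_card_sub_one_eq_one ha
  obtain ⟨t, rfl⟩ := hk
  rw [pow_succ, pow_mul, hsq, one_pow, one_mul]

lemma S_one_mul_two (x : ℕ) : S 1 x * 2 = x * (x + 1) := by
  rw [S_eq_sum_range_succ one_ne_zero]
  simp only [pow_one]
  rw [sum_range_id_mul_two, Nat.add_sub_cancel, mul_comm]

lemma not_three_dvd_S_of_odd {k x : ℕ} (hk : Odd k) (hx : x % 3 = 1) : ¬ 3 ∣ S k x := by
  have hS : ((S k x : ℕ) : ZMod 3) = S 1 x := by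
    simp only [S, Nat.cast_sum, Nat.cast_pow, pow_one, pow_eq_self_of_odd hk]
  have hx' : (x : ZMod 3) = 1 := by rw [← ZMod.natCast_mod, hx, Nat.cast_one]
  have h2 := congrArg (Nat.cast : ℕ → ZMod 3) (S_one_mul_two x)
  push_cast [hx'] at h2
  rw [← ZMod.natCast_eq_zero_iff, hS]
  intro h0
  rw [h0] at h2
  exact absurd h2 (by decide)

theorem stmt_14 (x k : ℕ) (hx : 0 < x) (hk : 0 < k) :
    (k = 1 → padicValNat 3 (S k x) = padicValNat 3 (x * (x + 1))) ∧
    (Even k → padicValNat 3 (S k x) = padicValNat 3 (x * (x + 1) * (2 * x + 1)) - 1) ∧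
    (x % 3 = 1 → 3 ≤ k → Odd k → padicValNat 3 (S k x) = 0) ∧
    ((x % 3 = 0 ∨ x % 3 = 2) → 3 ≤ k → Odd k →
      padicValNat 3 (S k x) = padicValNat 3 (k * x ^ 2 * (x + 1) ^ 2) - 1) := by
  refine ⟨?_, fun he => padicValNat_S_of_even he hk.ne' hx.ne', fun h3 _ ho =>
    padicValNat.eq_zero_of_not_dvd (not_three_dvd_S_of_odd ho h3), fun h3 hk3 ho =>
    padicValNat_S_of_odd ho (by omega) hx.ne' h3⟩
  rintro rfl
  rw [← S_one_mul_two, mul_comm, padicValNat_mul_of_not_dvd (by norm_num)]
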